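/- Let X be a metric space, q ∈ X, let c be a finite nonempty set of points of X with at least two elements, let v_{c₁} ∈ c be a point achieving the minimum of dist(q, ·) over c, let v_{c₂} ∈ c \ {v_{c₁}} be a point achieving the minimum of dist(q, ·) over c \ {v_{c₁}}, and let v_{NN} ∈ c \ {v_{c₁}} be a point achieving the minimum of dist(v_{c₁}, ·) over c \ {v_{c₁}}. If dist(q, v_{c₂}) > 0, then dist(q, v_{c₁}) / dist(q, v_{c₂}) ≥ dist(q, v_{c₁}) / (dist(q, v_{c₁}) + dist(v_{c₁}, v_{NN})). -/
import Mathlib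

/-- Lemma 2 stated in terms of nearest neighbors within a finite cluster:
the t-ratio is a lower bound for the local 1-ratio. -/
theorem t_ratio_le_local_one_ratio_of_cluster
    {X : Type*} [MetricSpace X] [DecidableEq X] (q : X) (c : Finset X) (hcard : 2 ≤ c.card)
    (vc₁ : X) (hvc₁ : vc₁ ∈ c) (hvc₁min : ∀ v ∈ c, dist q vc₁ ≤ dist q v)
    (vc₂ : X) (hvc₂ : vc₂ ∈ c.erase vc₁)
    (hvc₂min : ∀ v ∈ c.erase vc₁, dist q vc₂ ≤ dist q v)
    (vNN : X) (hvNN : vNN ∈ c.erase vc₁)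
    (hvNNmin : ∀ v ∈ c.erase vc₁, dist vc₁ vNN ≤ dist vc₁ v)
    (hpos : 0 < dist q vc₂) :
    dist q vc₁ / dist q vc₂ ≥ dist q vc₁ / (dist q vc₁ + dist vc₁ vNN) := by
  have h1 : dist q vc₂ ≤ dist q vNN := hvc₂min vNN hvNN
  have h2 : dist q vNN ≤ dist q vc₁ + dist vc₁ vNN := dist_triangle q vc₁ vNN
  exact div_le_div_of_nonneg_left dist_nonneg hpos (h1.trans h2)
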